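/- Let G = G₀ *_H G₁ be a nondegenerate free product with amalgamation and assume that H is finite. Then FC(G) = ker G, i.e., the set of elements of G with finite conjugacy class coincides with ⋂_{g ∈ G} gHg⁻¹. -/

import Mathlib

variable {G : Type*} [Group G]

/-- `AltWord G₀ G₁ H j w`: the list `w` is an alternating word whose `i`-th letter lies in
`G_{(i+j) mod 2} \ H`. -/
def AltWord (G₀ G₁ H : Subgroup G) (j : ℕ) (w : List G) : Prop :=
  ∀ (i : ℕ) (hi : i < w.length),
    w.get ⟨i, hi⟩ ∈ (if (i + j) % 2 = 0 then (G₀ : Set G) else (G₁ : Set G)) \ (H : Set G)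

/-- `G` is the free product of its subgroups `G₀` and `G₁` amalgamated over their common
subgroup `H` (internal characterization: `G₀ ∩ G₁ = H`, the subgroups `G₀` and `G₁` generate
`G`, and no nonempty alternating word with letters in `G₀ \ H` and `G₁ \ H` has product
in `H`). -/
structure IsAmalgam (G₀ G₁ H : Subgroup G) : Prop where
  le_left : H ≤ G₀
  le_right : H ≤ G₁
  inf_eq : G₀ ⊓ G₁ = H
  closure_eq_top : Subgroup.closure ((G₀ : Set G) ∪ (G₁ : Set G)) = ⊤
  reduced : ∀ (j : ℕ) (w : List G), w ≠ [] → AltWord G₀ G₁ H j w → w.prod ∉ H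

/-- The amalgam `G₀ *_H G₁` is *nondegenerate*: `([G₀ : H] − 1) · ([G₁ : H] − 1) ≥ 2`,
i.e. `H` is a proper subgroup of both `G₀` and `G₁`, and has index at least `3` (possibly
infinite) in at least one of them. -/
def Nondegenerate (G₀ G₁ H : Subgroup G) : Prop :=
  H.relIndex G₀ ≠ 1 ∧ H.relIndex G₁ ≠ 1 ∧ ¬(H.relIndex G₀ = 2 ∧ H.relIndex G₁ = 2)

/-- `T_{j,k}`: the set of elements of `G` that are products of alternating words of length
`k` whose first letter lies in `G_j \ H`; by convention `T_{j,0} = H`. -/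
def TT (G₀ G₁ H : Subgroup G) (j k : ℕ) : Set G :=
  if k = 0 then (H : Set G)
  else {g | ∃ w : List G, w.length = k ∧ AltWord G₀ G₁ H j w ∧ w.prod = g}

/-- `C_{j,k} = ⋂_{g ∈ T_{j,k}} g H g⁻¹`. -/
def CC (G₀ G₁ H : Subgroup G) (j k : ℕ) : Set G :=
  ⋂ g ∈ TT G₀ G₁ H j k, {x | g⁻¹ * x * g ∈ H}

/-- `K_j = ⋂_{k ≥ 0} C_{j,k}`. -/
def KK (G₀ G₁ H : Subgroup G) (j : ℕ) : Set G :=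
  ⋂ k : ℕ, CC G₀ G₁ H j k

/-- The kernel of the amalgam, `ker G = ⋂_{g ∈ G} g H g⁻¹`, as a set. -/
def amalgamKerSet (H : Subgroup G) : Set G :=
  ⋂ g : G, {x | g⁻¹ * x * g ∈ H}

/-!
A reduced alternating word with product `g ∉ H` exists, and its length depends only on `g`:
multiplying one such word by the inverse of another and reducing letter by letter loses at most
one letter per step, and no nonempty reduced word has product in `H`. A word of odd length begins
and ends in the same factor, so conjugating it by `(a * b) ^ n`, with `a` and `b` outside `H` in
the two factors, yields reduced words of the distinct lengths `4 * n + ℓ`. A word of even length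
ending in a letter `y` becomes odd after conjugation by some `z` of the factor of `y` with
`z, y * z ∉ H`; such a `z` exists when `H` has index at least `3` in that factor, and
nondegeneracy allows rotating the word so that this is the case. Hence an element with finite
conjugacy class lies in every conjugate of `H`; conversely, all conjugates of an element of
`ker G` lie in the finite group `H`.
-/

def altFactor (G₀ G₁ : Subgroup G) (j : ℕ) : Subgroup G := if j % 2 = 0 then G₀ else G₁

section altFactor

variable {G₀ G₁ H : Subgroup G}

theorem altFactor_congr {j j' : ℕ} (h : j % 2 = j' % 2) :
    altFactor G₀ G₁ j = altFactor G₀ G₁ j' := by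
  simp only [altFactor, h]

theorem le_altFactor (h₀ : H ≤ G₀) (h₁ : H ≤ G₁) (j : ℕ) :
    H ≤ altFactor G₀ G₁ j := by
  unfold altFactor; split_ifs <;> assumption

theorem exists_mem_altFactor_notMem (h₀ : ¬G₀ ≤ H) (h₁ : ¬G₁ ≤ H) (j : ℕ) :
    ∃ a ∈ altFactor G₀ G₁ j, a ∉ H :=
  SetLike.not_le_iff_exists.1 (by unfold altFactor; split_ifs <;> assumption)

theorem exists_mem_altFactor_of_mem_union {x : G} (hx : x ∈ (G₀ : Set G) ∪ G₁) :
    ∃ m, x ∈ altFactor G₀ G₁ m :=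
  hx.elim (fun h => ⟨0, by simpa [altFactor] using h⟩)
    (fun h => ⟨1, by simpa [altFactor] using h⟩)

end altFactor

theorem Subgroup.exists_mem_notMem_mul_notMem {H K : Subgroup G} (h2 : H.relIndex K ≠ 2)
    {x : G} (hxK : x ∈ K) (hxH : x ∉ H) : ∃ z ∈ K, z ∉ H ∧ x * z ∉ H := by
  by_contra! h
  exact h2 (Subgroup.relIndex_eq_two_iff_exists_notMem_and'.2
    ⟨x, hxK, hxH, fun z hz => or_iff_not_imp_right.2 (h z hz)⟩)

def pairPow {α : Type*} (a b : α) : ℕ → List α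
  | 0 => []
  | n + 1 => a :: b :: pairPow a b n

theorem length_pairPow {α : Type*} (a b : α) (n : ℕ) : (pairPow a b n).length = 2 * n := by
  induction n with
  | zero => rfl
  | succ n ih => simp [pairPow, ih]; omega

theorem prod_pairPow {M : Type*} [Monoid M] (a b : M) (n : ℕ) :
    (pairPow a b n).prod = (a * b) ^ n := by
  induction n with
  | zero => simp [pairPow]
  | succ n ih => simp [pairPow, ih, pow_succ', mul_assoc]

namespace AltWord

variable {G₀ G₁ H : Subgroup G} {j : ℕ} {a x : G} {u w : List G}

theorem iff_altFactor : AltWord G₀ G₁ H j w ↔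
    ∀ (i : ℕ) (hi : i < w.length), w[i] ∈ altFactor G₀ G₁ (i + j) ∧ w[i] ∉ H := by
  refine forall₂_congr fun i hi => ?_
  unfold altFactor
  split_ifs <;> rfl

theorem nil : AltWord G₀ G₁ H j [] :=
  fun _ hi => absurd hi (Nat.not_lt_zero _)

theorem cons_iff : AltWord G₀ G₁ H j (a :: w) ↔
    (a ∈ altFactor G₀ G₁ j ∧ a ∉ H) ∧ AltWord G₀ G₁ H (j + 1) w := by
  simp only [iff_altFactor, List.length_cons]
  constructor
  · intro h
    refine ⟨by simpa using h 0 (by omega), fun i hi => ?_⟩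
    have := h (i + 1) (by omega)
    rwa [List.getElem_cons_succ, show i + 1 + j = i + (j + 1) by omega] at this
  · rintro ⟨ha, hw⟩ (_ | i) hi
    · simpa using ha
    · simpa [show i + 1 + j = i + (j + 1) by omega] using hw i (by omega)

theorem singleton_iff : AltWord G₀ G₁ H j [a] ↔ a ∈ altFactor G₀ G₁ j ∧ a ∉ H := by
  simp [cons_iff, nil]

theorem append_iff {v : List G} : AltWord G₀ G₁ H j (u ++ v) ↔
    AltWord G₀ G₁ H j u ∧ AltWord G₀ G₁ H (j + u.length) v := by
  induction u generalizing j with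
  | nil => simp [nil]
  | cons b u ih =>
    rw [List.cons_append, cons_iff, cons_iff, ih, List.length_cons,
      show j + 1 + u.length = j + (u.length + 1) by omega]
    simp only [and_assoc]

theorem of_mod_eq {j' : ℕ} (h : j % 2 = j' % 2) (hw : AltWord G₀ G₁ H j w) :
    AltWord G₀ G₁ H j' w := by
  rw [iff_altFactor] at hw ⊢
  intro i hi
  rw [← altFactor_congr (j := i + j) (by omega)]
  exact hw i hi

theorem exists_mem_altFactor (hw : AltWord G₀ G₁ H j w) (ha : a ∈ w) :
    ∃ m, a ∈ altFactor G₀ G₁ m := by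
  obtain ⟨i, hi, rfl⟩ := List.getElem_of_mem ha
  exact ⟨_, (iff_altFactor.1 hw i hi).1⟩

theorem rotate (hw : AltWord G₀ G₁ H j (a :: w)) (heven : Even (a :: w).length) :
    AltWord G₀ G₁ H (j + 1) (w ++ [a]) := by
  rw [cons_iff] at hw
  obtain ⟨k, hk⟩ := heven
  refine append_iff.2 ⟨hw.2, singleton_iff.2 ⟨?_, hw.1.2⟩⟩
  rw [altFactor_congr (j' := j) (by simp at hk; omega)]
  exact hw.1.1

theorem exists_mul_eq_of_mem_altFactor_add_length (hu : AltWord G₀ G₁ H j u)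
    (hx : x ∈ altFactor G₀ G₁ (j + u.length)) :
    ∃ w, ∃ h ∈ H, AltWord G₀ G₁ H j w ∧ u.prod * x = w.prod * h ∧
      u.length ≤ w.length := by
  by_cases hxH : x ∈ H
  · exact ⟨u, x, hxH, hu, rfl, le_rfl⟩
  · exact ⟨u ++ [x], 1, one_mem H, append_iff.2 ⟨hu, singleton_iff.2 ⟨hx, hxH⟩⟩,
      by simp, by simp⟩

theorem exists_mul_eq_of_mem_altFactor {m : ℕ} (hu : AltWord G₀ G₁ H j u)
    (hx : x ∈ altFactor G₀ G₁ m) :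
    ∃ j' w, ∃ h ∈ H, AltWord G₀ G₁ H j' w ∧ u.prod * x = w.prod * h ∧
      u.length ≤ w.length + 1 := by
  rcases u.eq_nil_or_concat' with rfl | ⟨u, y, rfl⟩
  · obtain ⟨w, h, hh, hw, heq, -⟩ :=
      (nil (j := m)).exists_mul_eq_of_mem_altFactor_add_length (by simpa using hx)
    exact ⟨m, w, h, hh, hw, heq, by simp⟩
  obtain ⟨hu', hy⟩ := append_iff.1 hu
  obtain ⟨hyF, -⟩ := singleton_iff.1 hy
  by_cases hpar : (j + u.length) % 2 = m % 2
  · have hyx : y * x ∈ altFactor G₀ G₁ (j + u.length) :=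
      mul_mem hyF (by rwa [altFactor_congr hpar])
    obtain ⟨w, h, hh, hw, heq, hlen⟩ := hu'.exists_mul_eq_of_mem_altFactor_add_length hyx
    refine ⟨j, w, h, hh, hw, ?_, by simp; omega⟩
    rw [List.prod_append, List.prod_singleton, mul_assoc, heq]
  · obtain ⟨w, h, hh, hw, heq, hlen⟩ := hu.exists_mul_eq_of_mem_altFactor_add_length
      (x := x) (by rw [altFactor_congr (j' := m) (by simp; omega)]; exact hx)
    exact ⟨j, w, h, hh, hw, heq, by omega⟩

theorem exists_mul_mul_prod_eq (h₀ : H ≤ G₀) (h₁ : H ≤ G₁) {l : List G}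
    (hl : ∀ x ∈ l, ∃ m, x ∈ altFactor G₀ G₁ m) (hu : AltWord G₀ G₁ H j u) {h : G}
    (hh : h ∈ H) :
    ∃ j' w, ∃ h' ∈ H, AltWord G₀ G₁ H j' w ∧ u.prod * h * l.prod = w.prod * h' ∧
      u.length ≤ w.length + l.length := by
  induction l generalizing j u h with
  | nil => exact ⟨j, u, h, hh, hu, by simp, by simp⟩
  | cons x l ih =>
    obtain ⟨m, hx⟩ := hl x List.mem_cons_self
    obtain ⟨j₁, w₁, h₁, hh₁, hw₁, heq₁, hlen₁⟩ :=
      hu.exists_mul_eq_of_mem_altFactor (mul_mem (le_altFactor h₀ h₁ m hh) hx)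
    obtain ⟨j', w, h', hh', hw, heq, hlen⟩ :=
      ih (fun y hy => hl y (List.mem_cons_of_mem x hy)) hw₁ hh₁
    refine ⟨j', w, h', hh', hw, ?_, by simp; omega⟩
    rw [List.prod_cons, ← heq, ← heq₁, mul_assoc u.prod, mul_assoc, mul_assoc]

theorem exists_odd_isConj_of_even (hw : AltWord G₀ G₁ H j w) (hne : w ≠ [])
    (heven : Even w.length) (hidx : H.relIndex (altFactor G₀ G₁ (j + 1)) ≠ 2) :
    ∃ w', AltWord G₀ G₁ H (j + 1) w' ∧ Odd w'.length ∧ IsConj w.prod w'.prod := by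
  obtain ⟨w, y, rfl⟩ := w.eq_nil_or_concat'.resolve_left hne
  obtain ⟨hw, hy⟩ := append_iff.1 hw
  obtain ⟨hyF, hyH⟩ := singleton_iff.1 hy
  obtain ⟨k, hk⟩ : Odd w.length := by simpa [Nat.even_add_one] using heven
  rw [altFactor_congr (j' := j + 1) (by omega)] at hyF
  obtain ⟨z, hzF, hzH, hyz⟩ := Subgroup.exists_mem_notMem_mul_notMem hidx hyF hyH
  have hyzF : y * z ∈ altFactor G₀ G₁ (j + 1 + 1 + w.length) := by
    rw [altFactor_congr (j' := j + 1) (by omega)]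
    exact mul_mem hyF hzF
  refine ⟨z⁻¹ :: (w ++ [y * z]), ?_, ⟨k + 1, by simp; omega⟩,
    isConj_iff.2 ⟨z⁻¹, by simp [mul_assoc]⟩⟩
  refine cons_iff.2 ⟨⟨inv_mem hzF, inv_mem_iff.not.2 hzH⟩, ?_⟩
  exact append_iff.2 ⟨hw.of_mod_eq (by omega), singleton_iff.2 ⟨hyzF, hyz⟩⟩

end AltWord

theorem altWord_pairPow {G₀ G₁ H : Subgroup G} {a b : G} {j : ℕ}
    (ha : a ∈ altFactor G₀ G₁ j ∧ a ∉ H) (hb : b ∈ altFactor G₀ G₁ (j + 1) ∧ b ∉ H)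
    (n : ℕ) :
    AltWord G₀ G₁ H j (pairPow a b n) := by
  induction n with
  | zero => exact AltWord.nil
  | succ n ih =>
    exact AltWord.cons_iff.2 ⟨ha, AltWord.cons_iff.2 ⟨hb, ih.of_mod_eq (by omega)⟩⟩

namespace Nondegenerate

variable {G₀ G₁ H : Subgroup G}

theorem not_le_left (hnd : Nondegenerate G₀ G₁ H) : ¬G₀ ≤ H :=
  mt Subgroup.relIndex_eq_one.2 hnd.1

theorem not_le_right (hnd : Nondegenerate G₀ G₁ H) : ¬G₁ ≤ H :=
  mt Subgroup.relIndex_eq_one.2 hnd.2.1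

theorem relIndex_altFactor_ne_two (hnd : Nondegenerate G₀ G₁ H) {j : ℕ}
    (h : H.relIndex (altFactor G₀ G₁ (j + 1)) = 2) :
    H.relIndex (altFactor G₀ G₁ j) ≠ 2 := by
  have := hnd.2.2
  rcases Nat.mod_two_eq_zero_or_one j with hj | hj <;>
    simp_all [altFactor, show (j + 1) % 2 = 1 - j % 2 by omega]

end Nondegenerate

namespace IsAmalgam

variable {G₀ G₁ H : Subgroup G} {j k : ℕ} {u v w : List G}

theorem eq_nil_of_prod_mem (ha : IsAmalgam G₀ G₁ H) (hw : AltWord G₀ G₁ H j w)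
    (h : w.prod ∈ H) : w = [] := by
  by_contra hne
  exact ha.reduced j w hne hw h

theorem length_le_of_prod_eq (ha : IsAmalgam G₀ G₁ H) (hu : AltWord G₀ G₁ H j u)
    (hv : AltWord G₀ G₁ H k v) (h : u.prod = v.prod) : u.length ≤ v.length := by
  have hl : ∀ x ∈ (v.map (·⁻¹)).reverse, ∃ m, x ∈ altFactor G₀ G₁ m := by
    simp only [List.mem_reverse, List.mem_map]
    rintro _ ⟨y, hy, rfl⟩
    obtain ⟨m, hm⟩ := hv.exists_mem_altFactor hy
    exact ⟨m, inv_mem hm⟩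
  obtain ⟨j', w, h', hh', hw, heq, hlen⟩ :=
    hu.exists_mul_mul_prod_eq ha.le_left ha.le_right hl (one_mem H)
  rw [← List.prod_inv_reverse, mul_one, h, mul_inv_cancel, eq_comm, mul_eq_one_iff_eq_inv] at heq
  have hw_nil : w = [] := ha.eq_nil_of_prod_mem hw (heq ▸ inv_mem hh')
  simpa [hw_nil] using hlen

theorem length_eq_of_prod_eq (ha : IsAmalgam G₀ G₁ H) (hu : AltWord G₀ G₁ H j u)
    (hv : AltWord G₀ G₁ H k v) (h : u.prod = v.prod) : u.length = v.length :=
  (ha.length_le_of_prod_eq hu hv h).antisymm (ha.length_le_of_prod_eq hv hu h.symm)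

theorem exists_altWord_mul_eq (ha : IsAmalgam G₀ G₁ H) (g : G) :
    ∃ j w, ∃ h ∈ H, AltWord G₀ G₁ H j w ∧ w.prod * h = g := by
  have step : ∀ x y, (∃ m, y ∈ altFactor G₀ G₁ m) →
      (∃ j w, ∃ h ∈ H, AltWord G₀ G₁ H j w ∧ w.prod * h = x) →
      ∃ j w, ∃ h ∈ H, AltWord G₀ G₁ H j w ∧ w.prod * h = x * y := by
    rintro x y ⟨m, hy⟩ ⟨j, w, h, hh, hw, rfl⟩
    obtain ⟨j', w', h', hh', hw', heq, -⟩ := hw.exists_mul_eq_of_mem_altFactor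
      (mul_mem (le_altFactor ha.le_left ha.le_right m hh) hy)
    exact ⟨j', w', h', hh', hw', by rw [← heq, mul_assoc]⟩
  have hg : g ∈ Subgroup.closure ((G₀ : Set G) ∪ G₁) :=
    ha.closure_eq_top ▸ Subgroup.mem_top g
  induction hg using Subgroup.closure_induction_right with
  | one => exact ⟨0, [], 1, one_mem H, AltWord.nil, by simp⟩
  | mul_right x _ y hy ih => exact step x y (exists_mem_altFactor_of_mem_union hy) ih
  | mul_inv_cancel x _ y hy ih =>
    obtain ⟨m, hm⟩ := exists_mem_altFactor_of_mem_union hy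
    exact step x y⁻¹ ⟨m, inv_mem hm⟩ ih

theorem exists_altWord_prod_eq (ha : IsAmalgam G₀ G₁ H) {g : G} (hg : g ∉ H) :
    ∃ j w, AltWord G₀ G₁ H j w ∧ w ≠ [] ∧ w.prod = g := by
  obtain ⟨j, w, h, hh, hw, rfl⟩ := ha.exists_altWord_mul_eq g
  rcases w.eq_nil_or_concat' with rfl | ⟨w, y, rfl⟩
  · exact absurd (by simpa using hh) hg
  obtain ⟨hw', hy⟩ := AltWord.append_iff.1 hw
  obtain ⟨hyF, hyH⟩ := AltWord.singleton_iff.1 hy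
  refine ⟨j, w ++ [y * h], AltWord.append_iff.2 ⟨hw', AltWord.singleton_iff.2 ⟨?_, ?_⟩⟩,
    by simp, by simp [mul_assoc]⟩
  · exact mul_mem hyF (le_altFactor ha.le_left ha.le_right _ hh)
  · exact fun hyh => hyH (by simpa using mul_mem hyh (inv_mem hh))

theorem conjugatesOf_infinite_of_odd (ha : IsAmalgam G₀ G₁ H) (h₀ : ¬G₀ ≤ H)
    (h₁ : ¬G₁ ≤ H) (hw : AltWord G₀ G₁ H j w) (hodd : Odd w.length) :
    (conjugatesOf w.prod).Infinite := by
  obtain ⟨a, haF, haH⟩ := exists_mem_altFactor_notMem h₀ h₁ (j + 1)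
  obtain ⟨b, hbF, hbH⟩ := exists_mem_altFactor_notMem h₀ h₁ j
  let word n := pairPow b⁻¹ a⁻¹ n ++ w ++ pairPow a b n
  have hword : ∀ n, AltWord G₀ G₁ H j (word n) := fun n => by
    refine AltWord.append_iff.2 ⟨AltWord.append_iff.2 ⟨?_, hw.of_mod_eq ?_⟩, ?_⟩
    · exact altWord_pairPow ⟨inv_mem hbF, inv_mem_iff.not.2 hbH⟩
        ⟨inv_mem haF, inv_mem_iff.not.2 haH⟩ n
    · simp [length_pairPow]
    · have hbF' : b ∈ altFactor G₀ G₁ (j + 1 + 1) := by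
        rwa [altFactor_congr (j' := j) (by omega)]
      refine (altWord_pairPow ⟨haF, haH⟩ ⟨hbF', hbH⟩ n).of_mod_eq ?_
      obtain ⟨k, hk⟩ := hodd
      simp [length_pairPow]
      omega
  have hlen : ∀ n, (word n).length = 4 * n + w.length := fun n => by
    simp [word, length_pairPow]; omega
  refine Set.infinite_of_injective_forall_mem (f := fun n => (word n).prod)
    (fun n m hnm => ?_) (fun n => isConj_iff.2 ⟨((a * b) ^ n)⁻¹, ?_⟩)
  · have := ha.length_eq_of_prod_eq (hword n) (hword m) hnm
    rw [hlen, hlen] at this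
    omega
  · simp only [word, List.prod_append, prod_pairPow, ← inv_pow, mul_inv_rev, inv_inv, mul_assoc]

theorem conjugatesOf_infinite (ha : IsAmalgam G₀ G₁ H) (hnd : Nondegenerate G₀ G₁ H) {g : G}
    (hg : g ∉ H) : (conjugatesOf g).Infinite := by
  obtain ⟨j, w, hw, hne, rfl⟩ := ha.exists_altWord_prod_eq hg
  rcases Nat.even_or_odd w.length with heven | hodd
  · suffices ∃ k w', AltWord G₀ G₁ H k w' ∧ Odd w'.length ∧ IsConj w.prod w'.prod by
      obtain ⟨k, w', hw', hodd, hconj⟩ := this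
      rw [isConj_iff_conjugatesOf_eq.1 hconj]
      exact ha.conjugatesOf_infinite_of_odd hnd.not_le_left hnd.not_le_right hw' hodd
    by_cases hidx : H.relIndex (altFactor G₀ G₁ (j + 1)) = 2
    · obtain ⟨a, t, rfl⟩ := List.exists_cons_of_ne_nil hne
      have hrot : IsConj (a :: t).prod (t ++ [a]).prod := isConj_iff.2 ⟨a⁻¹, by simp⟩
      obtain ⟨w', hw', hodd, hconj⟩ := (hw.rotate heven).exists_odd_isConj_of_even (by simp)
        (by simpa [Nat.even_add_one] using heven)
        (by rw [altFactor_congr (j' := j) (by omega)]; exact hnd.relIndex_altFactor_ne_two hidx)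
      exact ⟨_, w', hw', hodd, hrot.trans hconj⟩
    · exact ⟨_, hw.exists_odd_isConj_of_even hne heven hidx⟩
  · exact ha.conjugatesOf_infinite_of_odd hnd.not_le_left hnd.not_le_right hw hodd

end IsAmalgam

/-- Let `G = G₀ *_H G₁` be a nondegenerate free product with amalgamation and assume that
`H` is finite. Then `FC(G) = ker G`: the set of elements of `G` with finite conjugacy
class coincides with `⋂_{g ∈ G} g H g⁻¹`. -/
theorem fc_eq_ker_of_finite {G : Type*} [Group G] (G₀ G₁ H : Subgroup G)
    (ha : IsAmalgam G₀ G₁ H) (hnd : Nondegenerate G₀ G₁ H)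
    (hfin : (H : Set G).Finite) :
    {g : G | {x : G | ∃ y : G, y * g * y⁻¹ = x}.Finite} = amalgamKerSet H := by
  have hconj : ∀ g : G, {x : G | ∃ y : G, y * g * y⁻¹ = x} = conjugatesOf g :=
    fun g => Set.ext fun _ => isConj_iff.symm
  ext x
  simp only [hconj, amalgamKerSet, Set.mem_ofPred_eq, Set.mem_iInter]
  constructor
  · intro hx g
    by_contra hg
    have : IsConj x (g⁻¹ * x * g) := isConj_iff.2 ⟨g⁻¹, by group⟩
    exact ha.conjugatesOf_infinite hnd hg (by rwa [← isConj_iff_conjugatesOf_eq.1 this])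
  · intro hx
    refine hfin.subset fun y hy => ?_
    obtain ⟨c, rfl⟩ := isConj_iff.1 hy
    simpa using hx c⁻¹
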